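/- arXiv:1703.00807 — 5 statements merged into one kernel-verified Lean document; each statement's English description precedes it below -/
import Mathlib

section
/- Let M, N, c, α1, α2, α3 > 0 with 4·N·c < M·α1·α3, and set p* = (M·α1·α3 − 4·N·c)/(2·M·α3) and r* = (1/α3)·log(4·N·c/(M·α2·α3)). Then (r*, p*) is a critical point of F: the partial derivative of F with respect to p at (r*, p*) equals 0, and the partial derivative of F with respect to r at (r*, p*) equals 0. -/
/-- The pair (r*, p*) is a critical point of the separate-sales gross profit
F(r, p) = M·p·(1 − p/(α1 − α2·exp(α3·r))) − N·c·(1 − r). -/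
theorem separate_sales_critical_point (M N c α1 α2 α3 pstar rstar : ℝ)
    (hM : 0 < M) (hN : 0 < N) (hc : 0 < c)
    (h1 : 0 < α1) (h2 : 0 < α2) (h3 : 0 < α3)
    (hlt : 4 * N * c < M * α1 * α3)
    (hp : pstar = (M * α1 * α3 - 4 * N * c) / (2 * M * α3))
    (hr : rstar = (1 / α3) * Real.log (4 * N * c / (M * α2 * α3))) :
    deriv (fun p : ℝ =>
        M * p * (1 - p / (α1 - α2 * Real.exp (α3 * rstar))) - N * c * (1 - rstar)) pstar = 0 ∧
    deriv (fun r : ℝ =>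
        M * pstar * (1 - pstar / (α1 - α2 * Real.exp (α3 * r))) - N * c * (1 - r)) rstar = 0 := by
  have hM' := hM.ne'
  have h3' := h3.ne'
  have h2' := h2.ne'
  have hpos : 0 < 4 * N * c / (M * α2 * α3) := by positivity
  have hexp : Real.exp (α3 * rstar) = 4 * N * c / (M * α2 * α3) := by
    rw [hr]
    rw [show α3 * (1 / α3 * Real.log (4 * N * c / (M * α2 * α3)))
        = Real.log (4 * N * c / (M * α2 * α3)) by field_simp]
    exact Real.exp_log hpos
  have hE : α2 * Real.exp (α3 * rstar) = 4 * N * c / (M * α3) := by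
    rw [hexp]; field_simp
  have hppos : 0 < pstar := by
    rw [hp]; apply div_pos (by linarith) (by positivity)
  have hu : α1 - α2 * Real.exp (α3 * rstar) = 2 * pstar := by
    rw [hE, hp]; field_simp
  have hune : α1 - α2 * Real.exp (α3 * rstar) ≠ 0 := by
    rw [hu]; positivity
  constructor
  · -- derivative in p
    have hd : HasDerivAt (fun p : ℝ =>
        M * p * (1 - p / (α1 - α2 * Real.exp (α3 * rstar))) - N * c * (1 - rstar))
        (M * 1 * (1 - pstar / (α1 - α2 * Real.exp (α3 * rstar)))
          + M * pstar * (0 - 1 / (α1 - α2 * Real.exp (α3 * rstar)))) pstar := by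
      have h1' : HasDerivAt (fun p : ℝ => M * p) (M * 1) pstar :=
        (hasDerivAt_id pstar).const_mul M
      have h2' : HasDerivAt (fun p : ℝ => 1 - p / (α1 - α2 * Real.exp (α3 * rstar)))
          (0 - 1 / (α1 - α2 * Real.exp (α3 * rstar))) pstar := by
        have := ((hasDerivAt_id pstar).div_const (α1 - α2 * Real.exp (α3 * rstar))).const_sub 1
        simpa using this
      exact (h1'.mul h2').sub_const _
    rw [hd.deriv, hu]
    field_simp
    ring
  · -- derivative in r
    set u : ℝ → ℝ := fun r => α1 - α2 * Real.exp (α3 * r) with hudef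
    have hg : HasDerivAt u (0 - α2 * (Real.exp (α3 * rstar) * α3)) rstar := by
      have he : HasDerivAt (fun r : ℝ => Real.exp (α3 * r)) (Real.exp (α3 * rstar) * α3) rstar := by
        simpa using ((hasDerivAt_id rstar).const_mul α3).exp
      simpa using (he.const_mul α2).const_sub α1
    have hgne : u rstar ≠ 0 := hune
    have hdiv : HasDerivAt (fun r : ℝ => pstar / u r)
        ((0 * u rstar - pstar * (0 - α2 * (Real.exp (α3 * rstar) * α3))) / (u rstar) ^ 2)
        rstar := (hasDerivAt_const rstar pstar).div hg hgne
    have hd : HasDerivAt (fun r : ℝ =>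
        M * pstar * (1 - pstar / (α1 - α2 * Real.exp (α3 * r))) - N * c * (1 - r))
        (M * pstar * (0 - (0 * u rstar - pstar * (0 - α2 * (Real.exp (α3 * rstar) * α3)))
            / (u rstar) ^ 2) - N * c * (0 - 1)) rstar := by
      have hL : HasDerivAt (fun r : ℝ => M * pstar * (1 - pstar / u r))
          (M * pstar * (0 - (0 * u rstar - pstar * (0 - α2 * (Real.exp (α3 * rstar) * α3)))
            / (u rstar) ^ 2)) rstar := by
        have := (hdiv.const_sub 1).const_mul (M * pstar)
        simpa using this
      have hR : HasDerivAt (fun r : ℝ => N * c * (1 - r)) (N * c * (0 - 1)) rstar := by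
        have := ((hasDerivAt_id rstar).const_sub 1).const_mul (N * c)
        simpa using this
      exact hL.sub hR
    rw [hd.deriv]
    have hu' : u rstar = 2 * pstar := hu
    rw [hu', hexp]
    have hp' : pstar ≠ 0 := hppos.ne'
    field_simp
    ring
end

section
/- Let M, α2, α3 > 0 and N, c ∈ ℝ. The function F(r, p) = M·p·(1 − p/(α1 − α2·exp(α3·r))) − N·c·(1 − r) is concave on the convex set S = {(r, p) ∈ ℝ × ℝ : α2·exp(α3·r) < α1}. -/
/-- Cauchy–Schwarz / quadratic-over-linear inequality. -/
lemma sep_cs_aux (a b p1 p2 u1 u2 q1 q2 : ℝ) (ha : 0 ≤ a) (hb : 0 ≤ b)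
    (hu1 : 0 < u1) (hu2 : 0 < u2) (hq1 : q1 * u1 = p1 ^ 2) (hq2 : q2 * u2 = p2 ^ 2) :
    (a * p1 + b * p2) ^ 2 ≤ (a * q1 + b * q2) * (a * u1 + b * u2) := by
  have hcross : 0 ≤ q1 * u2 + q2 * u1 - 2 * p1 * p2 := by
    have hid : (q1 * u2 + q2 * u1 - 2 * p1 * p2) * (u1 * u2) = (p1 * u2 - p2 * u1) ^ 2 := by
      linear_combination u2 ^ 2 * hq1 + u1 ^ 2 * hq2
    nlinarith [sq_nonneg (p1 * u2 - p2 * u1), mul_pos hu1 hu2]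
  have hid2 : (a * q1 + b * q2) * (a * u1 + b * u2) - (a * p1 + b * p2) ^ 2
      = a * b * (q1 * u2 + q2 * u1 - 2 * p1 * p2) := by
    linear_combination a ^ 2 * hq1 + b ^ 2 * hq2
  linarith [hid2, mul_nonneg (mul_nonneg ha hb) hcross]

/-- Concavity of the quality part `p ↦ M p (1 - p/u)` along a segment. -/
lemma sep_quality_aux (M u1 u2 um p1 p2 a b : ℝ) (hM : 0 ≤ M)
    (hu1 : 0 < u1) (hu2 : 0 < u2) (hum : 0 < um) (hsum : a * u1 + b * u2 ≤ um)
    (ha : 0 ≤ a) (hb : 0 ≤ b) (hab : a + b = 1) (hpos : 0 < a * u1 + b * u2) :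
    a * (M * p1 * (1 - p1 / u1)) + b * (M * p2 * (1 - p2 / u2))
      ≤ M * (a * p1 + b * p2) * (1 - (a * p1 + b * p2) / um) := by
  have hq1 : (p1 ^ 2 / u1) * u1 = p1 ^ 2 := by field_simp
  have hq2 : (p2 ^ 2 / u2) * u2 = p2 ^ 2 := by field_simp
  have key : (a * p1 + b * p2) ^ 2 / um ≤ a * (p1 ^ 2 / u1) + b * (p2 ^ 2 / u2) := by
    have h1 : (a * p1 + b * p2) ^ 2 / um ≤ (a * p1 + b * p2) ^ 2 / (a * u1 + b * u2) := by
      gcongr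
    have h2 : (a * p1 + b * p2) ^ 2 / (a * u1 + b * u2)
        ≤ a * (p1 ^ 2 / u1) + b * (p2 ^ 2 / u2) := by
      rw [div_le_iff₀ hpos]
      exact sep_cs_aux a b p1 p2 u1 u2 _ _ ha hb hu1 hu2 hq1 hq2
    linarith
  have e1 : M * p1 * (1 - p1 / u1) = M * p1 - M * (p1 ^ 2 / u1) := by
    field_simp
  have e2 : M * p2 * (1 - p2 / u2) = M * p2 - M * (p2 ^ 2 / u2) := by
    field_simp
  have em : M * (a * p1 + b * p2) * (1 - (a * p1 + b * p2) / um)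
      = M * (a * p1 + b * p2) - M * ((a * p1 + b * p2) ^ 2 / um) := by
    field_simp
  rw [e1, e2, em]
  have hMkey : M * ((a * p1 + b * p2) ^ 2 / um)
      ≤ M * (a * (p1 ^ 2 / u1) + b * (p2 ^ 2 / u2)) :=
    mul_le_mul_of_nonneg_left key hM
  nlinarith [hMkey]

/-- The separate-sales gross profit F(r, p) = M·p·(1 − p/(α1 − α2·exp(α3·r))) − N·c·(1 − r)
is concave on the convex set S = {(r, p) : α2·exp(α3·r) < α1}. -/
theorem separate_sales_profit_concave (M N c α1 α2 α3 : ℝ)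
    (hM : 0 < M) (h2 : 0 < α2) (h3 : 0 < α3) :
    ConcaveOn ℝ {x : ℝ × ℝ | α2 * Real.exp (α3 * x.1) < α1}
      (fun x : ℝ × ℝ =>
        M * x.2 * (1 - x.2 / (α1 - α2 * Real.exp (α3 * x.1))) - N * c * (1 - x.1)) := by
  have expcvx : ∀ (s t a b : ℝ), 0 ≤ a → 0 ≤ b → a + b = 1 →
      Real.exp (α3 * (a * s + b * t)) ≤ a * Real.exp (α3 * s) + b * Real.exp (α3 * t) := by
    intro s t a b ha hb hab
    have := convexOn_exp.2 (Set.mem_univ (α3 * s)) (Set.mem_univ (α3 * t)) ha hb hab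
    simpa [smul_eq_mul, mul_add, mul_comm, mul_left_comm, mul_assoc] using this
  constructor
  · intro x hx y hy a b ha hb hab
    simp only [Set.mem_setOf_eq] at hx hy ⊢
    have hfst : (a • x + b • y).1 = a * x.1 + b * y.1 := rfl
    rw [hfst]
    have h := expcvx x.1 y.1 a b ha hb hab
    rcases ha.eq_or_lt with h0 | h0
    · have hb1 : b = 1 := by linarith
      have harg : a * x.1 + b * y.1 = y.1 := by rw [← h0, hb1]; ring
      rw [harg]; exact hy
    · have hA : a * (α2 * Real.exp (α3 * x.1)) < a * α1 := by
        exact mul_lt_mul_of_pos_left hx h0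
      have hB : b * (α2 * Real.exp (α3 * y.1)) ≤ b * α1 :=
        mul_le_mul_of_nonneg_left hy.le hb
      have hC : α2 * Real.exp (α3 * (a * x.1 + b * y.1))
          ≤ α2 * (a * Real.exp (α3 * x.1) + b * Real.exp (α3 * y.1)) :=
        mul_le_mul_of_nonneg_left h h2.le
      have habα : a * α1 + b * α1 = α1 := by linear_combination α1 * hab
      linarith [hA, hB, hC, habα]
  · intro x hx y hy a b ha hb hab
    simp only [Set.mem_setOf_eq] at hx hy
    have hu1 : 0 < α1 - α2 * Real.exp (α3 * x.1) := by linarith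
    have hu2 : 0 < α1 - α2 * Real.exp (α3 * y.1) := by linarith
    have h := expcvx x.1 y.1 a b ha hb hab
    have hC : α2 * Real.exp (α3 * (a * x.1 + b * y.1))
        ≤ α2 * (a * Real.exp (α3 * x.1) + b * Real.exp (α3 * y.1)) :=
      mul_le_mul_of_nonneg_left h h2.le
    have hsum : a * (α1 - α2 * Real.exp (α3 * x.1)) + b * (α1 - α2 * Real.exp (α3 * y.1))
        ≤ α1 - α2 * Real.exp (α3 * (a * x.1 + b * y.1)) := by
      have habα : a * α1 + b * α1 = α1 := by linear_combination α1 * hab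
      linarith [hC, habα]
    have hpos : 0 < a * (α1 - α2 * Real.exp (α3 * x.1))
        + b * (α1 - α2 * Real.exp (α3 * y.1)) := by
      rcases ha.eq_or_lt with h0 | h0
      · have hb1 : b = 1 := by linarith
        rw [← h0, hb1]; nlinarith
      · nlinarith [mul_pos h0 hu1, mul_nonneg hb hu2.le]
    have hum : 0 < α1 - α2 * Real.exp (α3 * (a * x.1 + b * y.1)) :=
      lt_of_lt_of_le hpos hsum
    have main := sep_quality_aux M _ _ _ x.2 y.2 a b hM.le hu1 hu2 hum hsum ha hb hab hpos
    have hlin : N * c * (1 - (a * x.1 + b * y.1))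
        = a * (N * c * (1 - x.1)) + b * (N * c * (1 - y.1)) := by
      linear_combination (-(N * c)) * hab
    have hfst : (a • x + b • y).1 = a * x.1 + b * y.1 := rfl
    have hsnd : (a • x + b • y).2 = a * x.2 + b * y.2 := rfl
    simp only [smul_eq_mul, hfst, hsnd]
    linarith [main, hlin]
end

section
/- Let M, N, c, α1, α2, α3 > 0 with M·α2·α3 ≤ 4·N·c < M·α1·α3, and set p* = (M·α1·α3 − 4·N·c)/(2·M·α3) and r* = (1/α3)·log(4·N·c/(M·α2·α3)). Then (r*, p*) lies in the feasible set S = {(r, p) : r ≥ 0, p ≥ 0, α2·exp(α3·r) < α1} and F attains its maximum over S at (r*, p*): for every (r, p) ∈ S, F(r, p) ≤ F(r*, p*). -/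
/-- Under M·α2·α3 ≤ 4·N·c < M·α1·α3, the point (r*, p*) lies in the feasible set
S = {(r, p) : r ≥ 0, p ≥ 0, α2·exp(α3·r) < α1} and maximizes the gross profit
F(r, p) = M·p·(1 − p/(α1 − α2·exp(α3·r))) − N·c·(1 − r) over S. -/
theorem separate_sales_global_optimum (M N c α1 α2 α3 pstar rstar : ℝ)
    (hM : 0 < M) (hN : 0 < N) (hc : 0 < c)
    (h1 : 0 < α1) (h2 : 0 < α2) (h3 : 0 < α3)
    (hle : M * α2 * α3 ≤ 4 * N * c) (hlt : 4 * N * c < M * α1 * α3)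
    (hp : pstar = (M * α1 * α3 - 4 * N * c) / (2 * M * α3))
    (hr : rstar = (1 / α3) * Real.log (4 * N * c / (M * α2 * α3))) :
    (0 ≤ rstar ∧ 0 ≤ pstar ∧ α2 * Real.exp (α3 * rstar) < α1) ∧
    ∀ r p : ℝ, 0 ≤ r → 0 ≤ p → α2 * Real.exp (α3 * r) < α1 →
      M * p * (1 - p / (α1 - α2 * Real.exp (α3 * r))) - N * c * (1 - r) ≤
      M * pstar * (1 - pstar / (α1 - α2 * Real.exp (α3 * rstar))) - N * c * (1 - rstar) := by
  have hden : (0:ℝ) < M * α2 * α3 := by positivity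
  set E : ℝ := 4 * N * c / (M * α2 * α3) with hE
  have hE1 : (1:ℝ) ≤ E := (one_le_div hden).mpr hle
  have hEpos : (0:ℝ) < E := lt_of_lt_of_le one_pos hE1
  have hEexp : Real.exp (α3 * rstar) = E := by
    rw [hr]
    have : α3 * (1 / α3 * Real.log E) = Real.log E := by
      field_simp
    rw [this, Real.exp_log hEpos]
  have hId : M * α2 * α3 * E = 4 * N * c := by
    rw [hE]; field_simp
  have hrnn : 0 ≤ rstar := by
    rw [hr]
    have := Real.log_nonneg hE1
    positivity
  have hustar : α1 - α2 * E > 0 := by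
    nlinarith [hId, mul_pos hM h3, hlt]
  have hpstar : pstar = (α1 - α2 * E) / 2 := by
    rw [hp]
    rw [div_eq_div_iff (by positivity) (by norm_num)]
    linear_combination 2 * hId
  have hpnn : 0 ≤ pstar := by rw [hpstar]; positivity
  have hmem : α2 * Real.exp (α3 * rstar) < α1 := by
    rw [hEexp]; linarith
  refine ⟨⟨hrnn, hpnn, hmem⟩, ?_⟩
  intro r p hr0 hp0 hfeas
  set Er : ℝ := Real.exp (α3 * r) with hEr
  have hErpos : 0 < Er := Real.exp_pos _
  have hu : 0 < α1 - α2 * Er := by linarith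
  -- RHS value: pstar = u*/2
  have hRHS : M * pstar * (1 - pstar / (α1 - α2 * Real.exp (α3 * rstar))) - N * c * (1 - rstar)
      = M * (α1 - α2 * E) / 4 - N * c * (1 - rstar) := by
    rw [hEexp, hpstar]
    field_simp
    ring
  rw [hRHS]
  -- Step 1: inner max over p
  have step1 : M * p * (1 - p / (α1 - α2 * Er)) ≤ M * (α1 - α2 * Er) / 4 := by
    have h := sq_nonneg ((α1 - α2 * Er) - 2 * p)
    have hrewrite : M * p * (1 - p / (α1 - α2 * Er)) =
        M * (p * (α1 - α2 * Er) - p ^ 2) / (α1 - α2 * Er) := by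
      field_simp
    rw [hrewrite, div_le_iff₀ hu]
    nlinarith [mul_nonneg hM.le h]
  -- Step 2: convexity bound exp x ≥ 1 + x
  have hexp : E * (α3 * (r - rstar) + 1) ≤ Er := by
    have h := Real.add_one_le_exp (α3 * (r - rstar))
    have : Real.exp (α3 * (r - rstar)) = Er / E := by
      rw [hEr, ← hEexp, ← Real.exp_sub]; ring_nf
    rw [this] at h
    calc E * (α3 * (r - rstar) + 1) ≤ E * (Er / E) := by
          apply mul_le_mul_of_nonneg_left h hEpos.le
      _ = Er := by field_simp
  have h4 : M * α2 * (E * (α3 * (r - rstar) + 1)) ≤ M * α2 * Er :=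
    mul_le_mul_of_nonneg_left hexp (by positivity)
  have h5 : M * α2 * α3 * E * (r - rstar) = 4 * N * c * (r - rstar) := by
    rw [hId]
  have step2 : M * (α1 - α2 * Er) / 4 - N * c * (1 - r)
      ≤ M * (α1 - α2 * E) / 4 - N * c * (1 - rstar) := by
    nlinarith [h4, h5]
  linarith
end

section
/- Let M, N, α1, α2, α3 > 0. The optimal total data cost h(c) = N·c·(1 − (1/α3)·log(4·N·c/(M·α2·α3))), viewed as a function of the reservation wage c on (0, ∞), is strictly concave on (0, ∞) and attains its unique maximum at c₀ = M·α2·α3·exp(α3 − 1)/(4·N). -/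
lemma aux_mul_one_sub_log_lt {t : ℝ} (ht : 0 < t) (hne : t ≠ 1) :
    t * (1 - Real.log t) < 1 := by
  set s := Real.log t with hs
  have hts : t = Real.exp s := (Real.exp_log ht).symm
  have hsne : s ≠ 0 := by
    intro h0
    apply hne
    rw [hts, h0, Real.exp_zero]
  rw [hts]
  rcases le_or_gt 1 s with h | h
  · have : Real.exp s * (1 - s) ≤ 0 :=
      mul_nonpos_of_nonneg_of_nonpos (Real.exp_pos s).le (by linarith)
    linarith
  · have key : -s + 1 < Real.exp (-s) := Real.add_one_lt_exp (neg_ne_zero.mpr hsne)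
    have hpos : 0 < Real.exp s := Real.exp_pos s
    have : Real.exp s * (-s + 1) < Real.exp s * Real.exp (-s) :=
      mul_lt_mul_of_pos_left key hpos
    rw [← Real.exp_add, add_neg_cancel, Real.exp_zero] at this
    linarith [this]

lemma aux_strictConvexOn_smul {s : Set ℝ} {f : ℝ → ℝ} {k : ℝ} (hk : 0 < k)
    (hf : StrictConvexOn ℝ s f) : StrictConvexOn ℝ s (fun x => k * f x) := by
  refine ⟨hf.1, fun x hx y hy hxy a b ha hb hab => ?_⟩
  have := hf.2 hx hy hxy ha hb hab
  simp only [smul_eq_mul] at this ⊢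
  nlinarith [mul_lt_mul_of_pos_left this hk]

lemma aux_strictConcaveOn_congr {s : Set ℝ} {f g : ℝ → ℝ}
    (h : StrictConcaveOn ℝ s g) (he : ∀ x ∈ s, f x = g x) :
    StrictConcaveOn ℝ s f := by
  refine ⟨h.1, fun x hx y hy hxy a b ha hb hab => ?_⟩
  rw [he _ hx, he _ hy, he _ (h.1 hx hy ha.le hb.le hab)]
  exact h.2 hx hy hxy ha hb hab

/-- The optimal total data cost h(c) = N·c·(1 − (1/α3)·log(4·N·c/(M·α2·α3))) is strictly
concave on (0, ∞) and attains its unique maximum over (0, ∞) at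
c₀ = M·α2·α3·exp(α3 − 1)/(4·N). -/
theorem optimal_data_cost_vs_wage (M N α1 α2 α3 c0 : ℝ)
    (hM : 0 < M) (hN : 0 < N)
    (h1 : 0 < α1) (h2 : 0 < α2) (h3 : 0 < α3)
    (hc0 : c0 = M * α2 * α3 * Real.exp (α3 - 1) / (4 * N)) :
    StrictConcaveOn ℝ (Set.Ioi 0)
      (fun c : ℝ => N * c * (1 - (1 / α3) * Real.log (4 * N * c / (M * α2 * α3)))) ∧
    c0 ∈ Set.Ioi (0 : ℝ) ∧
    ∀ c ∈ Set.Ioi (0 : ℝ), c ≠ c0 →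
      N * c * (1 - (1 / α3) * Real.log (4 * N * c / (M * α2 * α3))) <
      N * c0 * (1 - (1 / α3) * Real.log (4 * N * c0 / (M * α2 * α3))) := by
  have hK : (0:ℝ) < 4 * N / (M * α2 * α3) := by positivity
  have hc0pos : 0 < c0 := by rw [hc0]; positivity
  set L : ℝ := Real.log (4 * N / (M * α2 * α3)) with hL
  -- log decomposition for c > 0
  have hlog : ∀ c : ℝ, 0 < c →
      Real.log (4 * N * c / (M * α2 * α3)) = L + Real.log c := by
    intro c hc
    have : 4 * N * c / (M * α2 * α3) = (4 * N / (M * α2 * α3)) * c := by ring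
    rw [this, Real.log_mul (ne_of_gt hK) (ne_of_gt hc)]
  -- value of the inner log at c0
  have hlogc0 : Real.log (4 * N * c0 / (M * α2 * α3)) = α3 - 1 := by
    have : 4 * N * c0 / (M * α2 * α3) = Real.exp (α3 - 1) := by
      rw [hc0]; field_simp
    rw [this, Real.log_exp]
  refine ⟨?_, hc0pos, ?_⟩
  · -- strict concavity
    have hconv : StrictConvexOn ℝ (Set.Ioi (0:ℝ)) (fun x => x * Real.log x) :=
      Real.strictConvexOn_mul_log.subset (Set.Ioi_subset_Ici le_rfl) (convex_Ioi 0)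
    have hconv' := aux_strictConvexOn_smul (k := N / α3) (by positivity) hconv
    have hcc : StrictConcaveOn ℝ (Set.Ioi (0:ℝ))
        (fun x => (N - N / α3 * L) * x + -(N / α3 * (x * Real.log x))) := by
      have hlin : ConcaveOn ℝ (Set.Ioi (0:ℝ)) (fun x : ℝ => (N - N / α3 * L) * x) := by
        have := ((N - N / α3 * L) • (LinearMap.id : ℝ →ₗ[ℝ] ℝ)).concaveOn (convex_Ioi (0:ℝ))
        simpa [Pi.smul_def, smul_eq_mul] using this
      exact hlin.add_strictConcaveOn hconv'.neg
    refine aux_strictConcaveOn_congr hcc ?_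
    intro c hc
    rw [hlog c hc]
    have h3ne : α3 ≠ 0 := ne_of_gt h3
    field_simp
    ring
  · -- unique maximum
    intro c hc hne
    have hcpos : 0 < c := hc
    set t : ℝ := c / c0 with ht
    have htpos : 0 < t := div_pos hcpos hc0pos
    have htne : t ≠ 1 := by
      intro h
      rw [ht, div_eq_one_iff_eq (ne_of_gt hc0pos)] at h
      exact hne h
    have key := aux_mul_one_sub_log_lt htpos htne
    have hlogc : Real.log (4 * N * c / (M * α2 * α3)) = (α3 - 1) + Real.log t := by
      rw [hlog c hcpos, ht, Real.log_div (ne_of_gt hcpos) (ne_of_gt hc0pos)]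
      have := hlog c0 hc0pos
      rw [hlogc0] at this
      linarith
    rw [hlogc, hlogc0]
    have hceq : c = c0 * t := by rw [ht]; field_simp
    have h3ne : α3 ≠ 0 := ne_of_gt h3
    have hrhs : N * c0 * (1 - 1 / α3 * (α3 - 1)) = N * c0 / α3 := by
      field_simp
      ring
    have hlhs : N * c * (1 - 1 / α3 * ((α3 - 1) + Real.log t))
        = (N * c0 / α3) * (t * (1 - Real.log t)) := by
      rw [hceq]; field_simp; ring
    rw [hrhs, hlhs]
    have hpos : 0 < N * c0 / α3 := by positivity
    calc (N * c0 / α3) * (t * (1 - Real.log t)) < (N * c0 / α3) * 1 :=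
          mul_lt_mul_of_pos_left key hpos
      _ = N * c0 / α3 := mul_one _
end

section
/- Fix r1, r2 with u1(r1) > 0 and u2(r2) > 0, let γ > −1, M > 0, and N, c1, c2 ∈ ℝ. Then the map p ↦ G_c(r1, r2, p) attains its maximum over the set {p : p ≥ 0} at p* = (1+γ)·√(2·u1(r1)·u2(r2)/3) (the exact value of the paper's approximation p_b* ≈ 0.82·(1+γ)·√(u1·u2)). -/
/-- Complements bundling profit
G_c(r1, r2, p) = M·p·(1 − p²/(2·(1+γ)²·u1(r1)·u2(r2))) − N·c1·(1−r1) − N·c2·(1−r2),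
with u1(r1) = α1 − α2·exp(α3·r1) and u2(r2) = β1 − β2·exp(β3·r2). -/
noncomputable def Gc (M N c1 c2 α1 α2 α3 β1 β2 β3 γ : ℝ) (r1 r2 p : ℝ) : ℝ :=
  M * p * (1 - p ^ 2 /
      (2 * (1 + γ) ^ 2 * (α1 - α2 * Real.exp (α3 * r1)) * (β1 - β2 * Real.exp (β3 * r2)))) -
    N * c1 * (1 - r1) - N * c2 * (1 - r2)

/-- With fixed privacy levels, the complements bundling profit p ↦ G_c(r1, r2, p)
attains its maximum over {p : p ≥ 0} at p* = (1+γ)·√(2·u1(r1)·u2(r2)/3). -/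
theorem complements_fixed_privacy_optimal_fee (M N c1 c2 α1 α2 α3 β1 β2 β3 γ r1 r2 pstar : ℝ)
    (hM : 0 < M) (hγ : -1 < γ)
    (hu1 : 0 < α1 - α2 * Real.exp (α3 * r1)) (hu2 : 0 < β1 - β2 * Real.exp (β3 * r2))
    (hps : pstar = (1 + γ) *
      Real.sqrt (2 * (α1 - α2 * Real.exp (α3 * r1)) * (β1 - β2 * Real.exp (β3 * r2)) / 3)) :
    0 ≤ pstar ∧
    ∀ p : ℝ, 0 ≤ p →
      Gc M N c1 c2 α1 α2 α3 β1 β2 β3 γ r1 r2 p ≤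
      Gc M N c1 c2 α1 α2 α3 β1 β2 β3 γ r1 r2 pstar := by
  set u1 := α1 - α2 * Real.exp (α3 * r1) with hu1def
  set u2 := β1 - β2 * Real.exp (β3 * r2) with hu2def
  have hg : (0:ℝ) < 1 + γ := by linarith
  have hx : (0:ℝ) ≤ 2 * u1 * u2 / 3 := by positivity
  have hsnn : 0 ≤ pstar := by
    rw [hps]; exact mul_nonneg hg.le (Real.sqrt_nonneg _)
  have hs2 : pstar ^ 2 = (1 + γ) ^ 2 * (2 * u1 * u2 / 3) := by
    rw [hps, mul_pow, Real.sq_sqrt hx]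
  refine ⟨hsnn, fun p hp => ?_⟩
  have hK : (0:ℝ) < 2 * (1 + γ) ^ 2 * u1 * u2 := by positivity
  unfold Gc
  rw [← hu1def, ← hu2def]
  have key : p * (1 - p ^ 2 / (2 * (1 + γ) ^ 2 * u1 * u2)) ≤
      pstar * (1 - pstar ^ 2 / (2 * (1 + γ) ^ 2 * u1 * u2)) := by
    rw [← sub_nonneg]
    have h : pstar * (1 - pstar ^ 2 / (2 * (1 + γ) ^ 2 * u1 * u2)) -
          p * (1 - p ^ 2 / (2 * (1 + γ) ^ 2 * u1 * u2)) =
          (p - pstar) ^ 2 * (p + 2 * pstar) / (2 * (1 + γ) ^ 2 * u1 * u2) := by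
      have hK3 : 2 * (1 + γ) ^ 2 * u1 * u2 = 3 * pstar ^ 2 := by rw [hs2]; ring
      field_simp
      linear_combination (pstar - p) * hK3
    rw [h]
    positivity
  have := mul_le_mul_of_nonneg_left key hM.le
  nlinarith [this]
end
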